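/- The true delayed gain perturbation satisfies the weight bound: for all ω with 0 ≤ ω < π/δt_d, and for all k ∈ [K, K+δK] and τ ∈ [0, δt_d], |(k/K)e^{−jτω} − 1| ≤ |((K+δK)/K)e^{−jδt_dω} − 1|, provided K, δK > 0. -/

import Mathlib

open Real Complex

lemma norm_ofReal_mul_exp_neg_I_mul_sub_one_sq (r θ : ℝ) :
    ‖(r : ℂ) * exp (-I * θ) - 1‖ ^ 2 = r ^ 2 - 2 * r * Real.cos θ + 1 := by
  have hexp : -I * (θ : ℂ) = ((-θ : ℝ) : ℂ) * I := by push_cast; ring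
  rw [hexp, exp_mul_I, ← normSq_eq_norm_sq, normSq_apply]
  simp only [sub_re, sub_im, mul_re, mul_im, add_re, add_im, ofReal_re, ofReal_im, I_re, I_im,
    cos_ofReal_re, cos_ofReal_im, sin_ofReal_re, sin_ofReal_im, one_re, one_im, Real.cos_neg,
    Real.sin_neg]
  nlinarith [Real.sin_sq_add_cos_sq θ]

/-- Moving `r e^{-iθ}` outwards (`r ≥ 1`) or rotating it towards `-1` (`θ ∈ [0, π]`) only
increases its distance from `1`. -/
lemma norm_ofReal_mul_exp_neg_I_mul_sub_one_le {r R θ φ : ℝ} (hr : 1 ≤ r) (hrR : r ≤ R)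
    (hθ : 0 ≤ θ) (hθφ : θ ≤ φ) (hφ : φ ≤ π) :
    ‖(r : ℂ) * exp (-I * θ) - 1‖ ≤ ‖(R : ℂ) * exp (-I * φ) - 1‖ := by
  have hcos : Real.cos φ ≤ Real.cos θ := Real.cos_le_cos_of_nonneg_of_le_pi hθ hφ hθφ
  have hcos_le_one : Real.cos θ ≤ 1 := Real.cos_le_one θ
  rw [← pow_le_pow_iff_left₀ (norm_nonneg _) (norm_nonneg _) two_ne_zero,
    norm_ofReal_mul_exp_neg_I_mul_sub_one_sq, norm_ofReal_mul_exp_neg_I_mul_sub_one_sq]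
  nlinarith

theorem laughlin_weight_covers_general (K δK δtd : ℝ) (hK : 0 < K) :
    ∀ ω : ℝ, 0 ≤ ω → ω < π / δtd →
      ∀ k ∈ Set.Icc K (K + δK), ∀ τ ∈ Set.Icc (0 : ℝ) δtd,
        ‖(k / K : ℂ) * Complex.exp (-Complex.I * τ * ω) - 1‖
          ≤ ‖((K + δK) / K : ℂ) * Complex.exp (-Complex.I * δtd * ω) - 1‖ := by
  intro ω hω hωπ k ⟨hKk, hk⟩ τ ⟨hτ, hτδ⟩
  have hδtd : 0 < δtd := by
    by_contra! h
    linarith [div_nonpos_of_nonneg_of_nonpos Real.pi_pos.le h]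
  have hφ : δtd * ω ≤ π := by
    rw [lt_div_iff₀ hδtd] at hωπ
    linarith
  have key := norm_ofReal_mul_exp_neg_I_mul_sub_one_le (θ := τ * ω) (φ := δtd * ω)
    ((one_le_div hK).mpr hKk) ((div_le_div_iff_of_pos_right hK).mpr hk)
    (mul_nonneg hτ hω) (mul_le_mul_of_nonneg_right hτδ hω) hφ
  push_cast at key
  simpa only [mul_assoc] using key

theorem laughlin_weight_covers (K δK δtd : ℝ) (hK : 0 < K) (hδK : 0 < δK) :
    ∀ ω : ℝ, 0 ≤ ω → ω < π / δtd →
      ∀ k ∈ Set.Icc K (K + δK), ∀ τ ∈ Set.Icc (0 : ℝ) δtd,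
        ‖(k / K : ℂ) * Complex.exp (-Complex.I * τ * ω) - 1‖
          ≤ ‖((K + δK) / K : ℂ) * Complex.exp (-Complex.I * δtd * ω) - 1‖ :=
  laughlin_weight_covers_general K δK δtd hK
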